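/- Let G be a set of odd positive integers whose reciprocal sum converges, and let H be a finite subset of G. Then the set A of odd positive integers n with {g ∈ G : g ∣ n} = H possesses a well-defined asymptotic density; moreover this density is positive whenever A is nonempty. -/

import Mathlib

open Filter

/-- The number of elements of `S` lying in `[1, x]`. -/
noncomputable def countIn (S : Set ℕ) (x : ℕ) : ℕ := (S ∩ Set.Icc 1 x).ncard

/-- `S` has asymptotic density `δ`. -/
def HasDensity (S : Set ℕ) (δ : ℝ) : Prop :=
  Tendsto (fun x : ℕ => (countIn S x : ℝ) / x) atTop (nhds δ)

/-- The upper asymptotic density of `S`. -/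
noncomputable def upperDensity (S : Set ℕ) : ℝ :=
  limsup (fun x : ℕ => (countIn S x : ℝ) / x) atTop

/-!
For `K ≥ max H`, "odd, with divisors in `G ∩ [1, K]` exactly `H`" is periodic mod `2 · K!`, hence
has a density, and it differs from the condition of the theorem only on multiples of elements of
`G` above `K`. Up to `x` there are at most `x ∑_{g ∈ G, g > K} 1/g` of those, a vanishing fraction
as `K → ∞`, so the counting ratios of the theorem form a Cauchy sequence.

For positivity take `n₀` in the set and `K ≥ n₀`: the residue class of `n₀` mod `q = 2 · K!` lies
in the set apart from multiples of some `g ∈ G` above `K`. Since `gcd(q, g)` divides `n₀`, the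
class contains at most `x n₀ / (q g) + 1` multiples of `g` up to `x`; choosing
`∑_{g ∈ G, g > K} 1/g ≤ 1/(2 n₀)`, and using that `G` has density zero, they take up at most
half of the class, which leaves density at least `1/(2q)`.
-/

open Finset Function
open scoped Nat

namespace countIn

lemma eq_card_filter (S : Set ℕ) [DecidablePred (· ∈ S)] (x : ℕ) :
    countIn S x = #{n ∈ Ioc 0 x | n ∈ S} := by
  rw [countIn, ← Set.ncard_coe_finset]
  congr 1
  ext n
  simp only [Set.mem_inter_iff, Set.mem_Icc, coe_filter, mem_Ioc, Set.mem_ofPred_eq]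
  grind

lemma setOf_eq_count (p : ℕ → Prop) [DecidablePred p] (x : ℕ) :
    countIn {n | p n} x = Nat.count (fun k => p (k + 1)) x := by
  rw [eq_card_filter, Nat.count_eq_card_filter_range]
  refine card_nbij' (· - 1) (· + 1) ?_ ?_ ?_ ?_ <;> intro n hn <;>
    simp only [coe_filter, mem_Ioc, mem_range, Set.mem_ofPred_eq] at hn ⊢
  · exact ⟨by omega, Nat.sub_add_cancel hn.1.1 ▸ hn.2⟩
  · exact ⟨by omega, hn.2⟩
  · omega
  · omega

lemma mono {S T : Set ℕ} (h : S ⊆ T) (x : ℕ) : countIn S x ≤ countIn T x :=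
  Set.ncard_le_ncard (Set.inter_subset_inter_left _ h) ((Set.finite_Icc 1 x).inter_of_right _)

lemma union_le (S T : Set ℕ) (x : ℕ) : countIn (S ∪ T) x ≤ countIn S x + countIn T x := by
  rw [countIn, Set.union_inter_distrib_right]
  exact Set.ncard_union_le _ _

lemma dvd (g x : ℕ) : countIn {n | g ∣ n} x = x / g := by
  rw [eq_card_filter, ← Nat.Ioc_filter_dvd_card_eq_div]
  rfl

lemma Iic_le (K x : ℕ) : countIn (Set.Iic K) x ≤ K :=
  (Set.ncard_le_ncard (t := Set.Icc 1 K) (fun _ hn => ⟨hn.2.1, hn.1⟩) (Set.finite_Icc 1 K)).trans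
    (by simp)

end countIn

lemma tendsto_div_of_abs_sub_mul_le {a : ℕ → ℝ} {L C : ℝ} (h : ∀ x : ℕ, |a x - L * x| ≤ C) :
    Tendsto (fun x : ℕ => a x / x) atTop (nhds L) := by
  have hdev : Tendsto (fun x : ℕ => (a x - L * x) / x) atTop (nhds 0) := by
    refine squeeze_zero_norm (fun x => ?_) (tendsto_const_div_atTop_nhds_zero_nat C)
    rw [norm_div, Real.norm_eq_abs, Real.norm_natCast]
    gcongr
    exact h x
  rw [← zero_add L]
  refine (hdev.add_const L).congr' ?_
  filter_upwards [eventually_ne_atTop 0] with x hx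
  field_simp
  ring

namespace Function.Periodic

variable {p : ℕ → Prop} [DecidablePred p] {q : ℕ}

lemma count_mul_add (hp : Periodic p q) (m r : ℕ) :
    Nat.count p (m * q + r) = m * Nat.count p q + Nat.count p r := by
  have hshift : (fun k => p (q + k)) = p := funext fun k => by rw [add_comm]; exact hp k
  induction m with
  | zero => simp
  | succ m ih =>
    rw [add_mul, one_mul, add_comm (m * q), add_assoc, Nat.count_add]
    simp only [hshift, ih]
    ring

lemma count_comp_succ (hp : Periodic p q) :
    Nat.count (fun k => p (k + 1)) q = Nat.count p q := by
  have hq0 : p q = p 0 := by simpa using hp 0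
  have h₁ := Nat.count_succ' p q
  have h₂ := Nat.count_succ p q
  simp only [hq0] at h₂
  omega

lemma abs_count_sub_le (hp : Periodic p q) (hq : 0 < q) (x : ℕ) :
    |(Nat.count p x : ℝ) - Nat.count p q / q * x| ≤ Nat.count p q := by
  set c := Nat.count p q
  have hcount : Nat.count p x = x / q * c + Nat.count p (x % q) := by
    rw [← hp.count_mul_add, Nat.div_add_mod']
  have hrem : Nat.count p (x % q) ≤ c := Nat.count_monotone p (Nat.mod_lt x hq).le
  have hx : (x : ℝ) = (x / q : ℕ) * q + (x % q : ℕ) := by exact_mod_cast (Nat.div_add_mod' x q).symm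
  have hq' : (0 : ℝ) < q := by exact_mod_cast hq
  have hfrac : (c : ℝ) / q * (x % q : ℕ) ≤ c := by
    rw [div_mul_eq_mul_div, div_le_iff₀ hq']
    gcongr
    exact_mod_cast (Nat.mod_lt x hq).le
  have hrem' : (Nat.count p (x % q) : ℝ) ≤ c := by exact_mod_cast hrem
  rw [hcount, hx, abs_le]
  push_cast
  constructor <;> nlinarith [mul_div_cancel₀ (c : ℝ) hq'.ne', div_nonneg c.cast_nonneg hq'.le]

lemma hasDensity (hp : Periodic p q) (hq : 0 < q) :
    HasDensity {n | p n} (Nat.count p q / q) := by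
  have hsucc : Periodic (fun k => p (k + 1)) q := fun k => by
    simpa only [add_right_comm] using hp (k + 1)
  refine tendsto_div_of_abs_sub_mul_le (C := Nat.count p q) fun x => ?_
  rw [countIn.setOf_eq_count, ← hp.count_comp_succ]
  exact hsucc.abs_count_sub_le hq x

end Function.Periodic

lemma hasDensity_setOf_modEq {q : ℕ} (hq : 0 < q) (n₀ : ℕ) :
    HasDensity {n | n ≡ n₀ [MOD q]} (1 / q) := by
  have hp : Periodic (· ≡ n₀ [MOD q]) q := fun n => by simp only [Nat.ModEq, Nat.add_mod_right]
  simpa [Nat.count_modEq_card _ hq, Nat.div_self hq] using hp.hasDensity hq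

lemma exists_tendsto_of_forall_eventually_dist_le {α β : Type*} [PseudoMetricSpace α]
    [CompleteSpace α] [Nonempty β] [SemilatticeSup β] {f : β → α}
    (h : ∀ ε > 0, ∃ u : β → α, (∃ L, Tendsto u atTop (nhds L)) ∧
      ∀ᶠ x in atTop, dist (f x) (u x) ≤ ε) :
    ∃ L, Tendsto f atTop (nhds L) := by
  refine cauchySeq_tendsto_of_complete (Metric.cauchySeq_iff.2 fun ε hε => ?_)
  obtain ⟨u, ⟨L, hu⟩, hfu⟩ := h (ε / 3) (by positivity)
  obtain ⟨N₁, hN₁⟩ := Metric.cauchySeq_iff.1 hu.cauchySeq (ε / 3) (by positivity)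
  obtain ⟨N₂, hN₂⟩ := eventually_atTop.1 hfu
  refine ⟨N₁ ⊔ N₂, fun m hm n hn => ?_⟩
  have h₁ := hN₂ m (sup_le_iff.1 hm).2
  have h₂ := hN₁ m (sup_le_iff.1 hm).1 n (sup_le_iff.1 hn).1
  have h₃ := hN₂ n (sup_le_iff.1 hn).2
  have h₄ := dist_triangle4 (f m) (u m) (u n) (f n)
  rw [dist_comm (u n)] at h₄
  linarith

lemma Summable.exists_forall_norm_sum_Ioc_lt {E : Type*} [SeminormedAddCommGroup E] {f : ℕ → E}
    (hf : Summable f) {ε : ℝ} (hε : 0 < ε) :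
    ∃ K₀, ∀ K ≥ K₀, ∀ x, ‖∑ g ∈ Ioc K x, f g‖ < ε := by
  obtain ⟨s, hs⟩ := hf.vanishing (Metric.ball_mem_nhds 0 hε)
  refine ⟨s.sup id, fun K hK x => ?_⟩
  have hdisj : Disjoint (Ioc K x) s := disjoint_left.2 fun g hg hgs => by
    have := le_sup (f := id) hgs
    simp only [mem_Ioc, id] at hg this
    omega
  simpa using hs _ hdisj

lemma Finset.card_le_div_add_one_of_modEq {s : Finset ℕ} {L x : ℕ} (hsx : ∀ n ∈ s, n ≤ x)
    (hs : ∀ m ∈ s, ∀ n ∈ s, m ≡ n [MOD L]) : #s ≤ x / L + 1 := by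
  calc #s ≤ #(range (x / L + 1)) := by
        refine card_le_card_of_injOn (· / L) (fun n hn => ?_) (fun m hm n hn hmn => ?_)
        · simpa [Nat.lt_succ_iff] using Nat.div_le_div_right (hsx n hn)
        · rw [← Nat.div_add_mod m L, ← Nat.div_add_mod n L, hs m hm n hn]
          simp only at hmn
          rw [hmn]
    _ = x / L + 1 := card_range _

lemma countIn_modEq_inter_dvd_le {q g n₀ : ℕ} (hq : 0 < q) (hg : 0 < g) (hn₀ : 0 < n₀) (x : ℕ) :
    (countIn ({n | n ≡ n₀ [MOD q]} ∩ {n | g ∣ n}) x : ℝ) ≤ x * n₀ / (q * g) + 1 := by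
  classical
  rw [countIn.eq_card_filter]
  set s := {n ∈ Ioc 0 x | n ∈ {n | n ≡ n₀ [MOD q]} ∩ {n | g ∣ n}}
  have hmem : ∀ n ∈ s, (0 < n ∧ n ≤ x) ∧ n ≡ n₀ [MOD q] ∧ g ∣ n := fun n hn => by
    simpa [s] using hn
  obtain hs | ⟨n₁, hn₁⟩ := s.eq_empty_or_nonempty
  · rw [hs, card_empty, Nat.cast_zero]
    positivity
  obtain ⟨-, hn₁q, hn₁g⟩ := hmem n₁ hn₁
  have hgcd : Nat.gcd q g ≤ n₀ :=
    Nat.le_of_dvd hn₀ ((hn₁q.dvd_iff (Nat.gcd_dvd_left q g)).1 ((Nat.gcd_dvd_right q g).trans hn₁g))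
  have hcard : #s ≤ x / Nat.lcm q g + 1 := by
    refine card_le_div_add_one_of_modEq (fun n hn => (hmem n hn).1.2) fun m hm n hn => ?_
    obtain ⟨-, hmq, hmg⟩ := hmem m hm
    obtain ⟨-, hnq, hng⟩ := hmem n hn
    exact Nat.mod_lcm (hmq.trans hnq.symm)
      ((Nat.modEq_zero_iff_dvd.2 hmg).trans (Nat.modEq_zero_iff_dvd.2 hng).symm)
  have hlcm : (q * g : ℝ) ≤ Nat.lcm q g * n₀ := by
    have hnat : q * g ≤ Nat.lcm q g * n₀ := by
      rw [← Nat.gcd_mul_lcm q g, mul_comm]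
      exact Nat.mul_le_mul_left _ hgcd
    exact_mod_cast hnat
  have hlcm_pos : (0 : ℝ) < Nat.lcm q g := by exact_mod_cast Nat.lcm_pos hq hg
  calc (#s : ℝ) ≤ (x / Nat.lcm q g : ℕ) + 1 := by exact_mod_cast hcard
    _ ≤ x / Nat.lcm q g + 1 := by gcongr; exact Nat.cast_div_le
    _ ≤ x * n₀ / (q * g) + 1 := by
        gcongr ?_ + 1
        rw [div_le_div_iff₀ hlcm_pos (by positivity)]
        nlinarith [(Nat.cast_nonneg x : (0 : ℝ) ≤ x)]

def oddWithDivisorsIn (G : Set ℕ) (H : Finset ℕ) : Set ℕ :=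
  {n | 0 < n ∧ Odd n ∧ {g ∈ G | g ∣ n} = ↑H}

def oddWithDivisorsUpTo (G : Set ℕ) (H : Finset ℕ) (K : ℕ) : Set ℕ :=
  {n | Odd n ∧ ∀ g ∈ G, g ≤ K → (g ∣ n ↔ g ∈ H)}

def multiplesAbove (G : Set ℕ) (K : ℕ) : Set ℕ :=
  {n | ∃ g ∈ G, K < g ∧ g ∣ n}

lemma countIn_inter_multiplesAbove_le {G : Set ℕ} [DecidablePred (· ∈ G)] (K : ℕ) (S : Set ℕ)
    (x : ℕ) :
    countIn (S ∩ multiplesAbove G K) x ≤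
      ∑ g ∈ Ioc K x with g ∈ G, countIn (S ∩ {n | g ∣ n}) x := by
  classical
  simp only [countIn.eq_card_filter]
  refine (card_le_card fun n hn => ?_).trans card_biUnion_le
  simp only [multiplesAbove, mem_filter, mem_Ioc, Set.mem_inter_iff, Set.mem_ofPred_eq,
    mem_biUnion] at hn ⊢
  obtain ⟨⟨hn0, hnx⟩, hS, g, hg, hKg, hgn⟩ := hn
  exact ⟨g, ⟨⟨hKg, (Nat.le_of_dvd hn0 hgn).trans hnx⟩, hg⟩, ⟨hn0, hnx⟩, hS, hgn⟩

lemma countIn_multiplesAbove_le (G : Set ℕ) (K x : ℕ) :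
    (countIn (multiplesAbove G K) x : ℝ) ≤
      x * ∑ g ∈ Ioc K x, G.indicator (fun g => (1 : ℝ) / g) g := by
  classical
  have h := countIn_inter_multiplesAbove_le (G := G) K Set.univ x
  simp only [Set.univ_inter, countIn.dvd] at h
  calc (countIn (multiplesAbove G K) x : ℝ) ≤ ∑ g ∈ Ioc K x with g ∈ G, ((x / g : ℕ) : ℝ) := by
        exact_mod_cast h
    _ ≤ ∑ g ∈ Ioc K x with g ∈ G, (x : ℝ) * (1 / g) := by
        gcongr
        rw [mul_one_div]
        exact Nat.cast_div_le
    _ = x * ∑ g ∈ Ioc K x, G.indicator (fun g => (1 : ℝ) / g) g := by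
        rw [← mul_sum, sum_indicator_eq_sum_filter]

lemma countIn_modEq_inter_multiplesAbove_le {G : Set ℕ} (hG : ∀ g ∈ G, 0 < g) {q n₀ : ℕ}
    (hq : 0 < q) (hn₀ : 0 < n₀) (K x : ℕ) :
    (countIn ({n | n ≡ n₀ [MOD q]} ∩ multiplesAbove G K) x : ℝ) ≤
      x * n₀ / q * ∑ g ∈ Ioc K x, G.indicator (fun g => (1 : ℝ) / g) g + countIn G x := by
  classical
  have hGx : #{g ∈ Ioc K x | g ∈ G} ≤ countIn G x := by
    rw [countIn.eq_card_filter]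
    exact card_le_card (filter_subset_filter _ (Ioc_subset_Ioc_left (Nat.zero_le K)))
  calc (countIn ({n | n ≡ n₀ [MOD q]} ∩ multiplesAbove G K) x : ℝ)
      ≤ ∑ g ∈ Ioc K x with g ∈ G, (countIn ({n | n ≡ n₀ [MOD q]} ∩ {n | g ∣ n}) x : ℝ) := by
        exact_mod_cast countIn_inter_multiplesAbove_le K _ x
    _ ≤ ∑ g ∈ Ioc K x with g ∈ G, (x * n₀ / q * (1 / g) + 1 : ℝ) := by
        refine sum_le_sum fun g hg => ?_
        rw [div_mul_div_comm, mul_one]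
        exact countIn_modEq_inter_dvd_le hq (hG g (mem_filter.1 hg).2) hn₀ x
    _ ≤ x * n₀ / q * ∑ g ∈ Ioc K x, G.indicator (fun g => (1 : ℝ) / g) g + countIn G x := by
        rw [sum_add_distrib, ← mul_sum, sum_indicator_eq_sum_filter, sum_const, nsmul_one]
        gcongr

lemma hasDensity_zero_of_summable_indicator {G : Set ℕ}
    (hf : Summable (G.indicator fun g => (1 : ℝ) / g)) : HasDensity G 0 := by
  have hsplit : ∀ K x, (countIn G x : ℝ) ≤
      K + x * ∑ g ∈ Ioc K x, G.indicator (fun g => (1 : ℝ) / g) g := by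
    intro K x
    have hcover : G ⊆ Set.Iic K ∪ multiplesAbove G K := fun g hg =>
      (le_or_gt g K).imp id fun hKg => ⟨g, hg, hKg, dvd_rfl⟩
    have h : (countIn G x : ℝ) ≤ countIn (Set.Iic K) x + countIn (multiplesAbove G K) x := by
      exact_mod_cast (countIn.mono hcover x).trans (countIn.union_le _ _ x)
    have hsmall : (countIn (Set.Iic K) x : ℝ) ≤ K := by exact_mod_cast countIn.Iic_le K x
    linarith [countIn_multiplesAbove_le G K x]
  refine tendsto_order.2 ⟨fun a ha => Eventually.of_forall fun x => ha.trans_le (by positivity),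
    fun a ha => ?_⟩
  obtain ⟨K, hK⟩ := hf.exists_forall_norm_sum_Ioc_lt (half_pos ha)
  filter_upwards [(tendsto_const_div_atTop_nhds_zero_nat (K : ℝ)).eventually
    (gt_mem_nhds (half_pos ha)), eventually_gt_atTop 0] with x hKx hx
  have hx' : (0 : ℝ) < x := by exact_mod_cast hx
  have hT := (Real.le_norm_self _).trans_lt (hK K le_rfl x)
  rw [div_lt_iff₀ hx'] at hKx ⊢
  nlinarith [hsplit K x]

section

variable {G : Set ℕ} {H : Finset ℕ} {K : ℕ}

lemma mem_oddWithDivisorsIn_iff {n : ℕ} (hn : n ∈ oddWithDivisorsIn G H) {g : ℕ} (hg : g ∈ G) :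
    g ∣ n ↔ g ∈ H := by
  have := Set.ext_iff.1 hn.2.2 g
  simp only [Set.mem_ofPred_eq, Finset.mem_coe] at this
  exact ⟨fun h => this.1 ⟨hg, h⟩, fun h => (this.2 h).2⟩

lemma oddWithDivisorsIn_subset_upTo : oddWithDivisorsIn G H ⊆ oddWithDivisorsUpTo G H K :=
  fun _ hn => ⟨hn.2.1, fun _ hg _ => mem_oddWithDivisorsIn_iff hn hg⟩

lemma oddWithDivisorsUpTo_subset_union (hH : ↑H ⊆ G) (hHK : ∀ h ∈ H, h ≤ K) :
    oddWithDivisorsUpTo G H K ⊆ oddWithDivisorsIn G H ∪ multiplesAbove G K := by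
  rintro n ⟨hodd, hdiv⟩
  by_cases hbad : n ∈ multiplesAbove G K
  · exact Or.inr hbad
  refine Or.inl ⟨hodd.pos, hodd, Set.ext fun g => ⟨fun ⟨hg, hgn⟩ => ?_, fun hgH => ?_⟩⟩
  · by_cases hgK : g ≤ K
    · exact (hdiv g hg hgK).1 hgn
    · exact absurd ⟨g, hg, not_le.1 hgK, hgn⟩ hbad
  · exact ⟨hH hgH, (hdiv g (hH hgH) (hHK g hgH)).2 hgH⟩

lemma periodic_mem_oddWithDivisorsUpTo (hG : ∀ g ∈ G, 0 < g) :
    Periodic (· ∈ oddWithDivisorsUpTo G H K) (2 * K !) := fun n => by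
  have hdvd : ∀ g ∈ G, g ≤ K → (g ∣ n + 2 * K ! ↔ g ∣ n) := fun g hg hgK =>
    Nat.dvd_add_left (dvd_mul_of_dvd_right (Nat.dvd_factorial (hG g hg) hgK) 2)
  simp only [oddWithDivisorsUpTo, Set.mem_ofPred_eq, Nat.odd_add, even_two_mul, iff_true]
  exact propext (and_congr_right fun _ => forall₂_congr fun g hg => imp_congr_right fun hgK => by
    rw [hdvd g hg hgK])

lemma setOf_modEq_subset_upTo (hG : ∀ g ∈ G, 0 < g) {n₀ : ℕ} (hn₀ : n₀ ∈ oddWithDivisorsIn G H) :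
    {n | n ≡ n₀ [MOD 2 * K !]} ⊆ oddWithDivisorsUpTo G H K := fun n hn => by
  refine ⟨?_, fun g hg hgK => ?_⟩
  · have h2 : n % 2 = n₀ % 2 := Nat.ModEq.of_dvd (dvd_mul_right 2 _) hn
    rw [Nat.odd_iff, h2, ← Nat.odd_iff]
    exact hn₀.2.1
  · rw [← mem_oddWithDivisorsIn_iff hn₀ hg]
    exact hn.dvd_iff (dvd_mul_of_dvd_right (Nat.dvd_factorial (hG g hg) hgK) 2)

lemma countIn_setOf_modEq_le (hG : ∀ g ∈ G, 0 < g) (hH : ↑H ⊆ G) {n₀ : ℕ}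
    (hn₀ : n₀ ∈ oddWithDivisorsIn G H) (hK : n₀ ≤ K) (x : ℕ) :
    (countIn {n | n ≡ n₀ [MOD 2 * K !]} x : ℝ) ≤ countIn (oddWithDivisorsIn G H) x +
      x * n₀ / (2 * K ! : ℕ) * ∑ g ∈ Ioc K x, G.indicator (fun g => (1 : ℝ) / g) g +
        countIn G x := by
  have hHK : ∀ h ∈ H, h ≤ K := fun h hh =>
    (Nat.le_of_dvd hn₀.1 ((mem_oddWithDivisorsIn_iff hn₀ (hH hh)).2 hh)).trans hK
  have hsub : {n | n ≡ n₀ [MOD 2 * K !]} ⊆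
      oddWithDivisorsIn G H ∪ ({n | n ≡ n₀ [MOD 2 * K !]} ∩ multiplesAbove G K) := fun n hn =>
    (oddWithDivisorsUpTo_subset_union hH hHK (setOf_modEq_subset_upTo hG hn₀ hn)).imp_right
      fun h => ⟨hn, h⟩
  have hsplit : (countIn {n | n ≡ n₀ [MOD 2 * K !]} x : ℝ) ≤ countIn (oddWithDivisorsIn G H) x +
      countIn ({n | n ≡ n₀ [MOD 2 * K !]} ∩ multiplesAbove G K) x := by
    exact_mod_cast (countIn.mono hsub x).trans (countIn.union_le _ _ x)
  linarith [countIn_modEq_inter_multiplesAbove_le hG (by positivity : 0 < 2 * K !) hn₀.1 K x]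

lemma exists_hasDensity_oddWithDivisorsIn (hG : ∀ g ∈ G, 0 < g)
    (hf : Summable (G.indicator fun g => (1 : ℝ) / g)) (hH : ↑H ⊆ G) :
    ∃ δ, HasDensity (oddWithDivisorsIn G H) δ := by
  classical
  refine exists_tendsto_of_forall_eventually_dist_le fun ε hε => ?_
  obtain ⟨K₀, hK₀⟩ := hf.exists_forall_norm_sum_Ioc_lt hε
  obtain ⟨K, hK₀K, hHK⟩ : ∃ K, K₀ ≤ K ∧ ∀ h ∈ H, h ≤ K :=
    ⟨max K₀ (H.sup id), le_max_left _ _, fun h hh => (le_sup (f := id) hh).trans (le_max_right _ _)⟩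
  refine ⟨fun x => (countIn (oddWithDivisorsUpTo G H K) x : ℝ) / x,
    ⟨_, (periodic_mem_oddWithDivisorsUpTo hG).hasDensity (by positivity)⟩,
    eventually_gt_atTop 0 |>.mono fun x hx => ?_⟩
  have hlow : (countIn (oddWithDivisorsIn G H) x : ℝ) ≤ countIn (oddWithDivisorsUpTo G H K) x := by
    exact_mod_cast countIn.mono oddWithDivisorsIn_subset_upTo x
  have hhigh : (countIn (oddWithDivisorsUpTo G H K) x : ℝ) ≤
      countIn (oddWithDivisorsIn G H) x + countIn (multiplesAbove G K) x := by
    exact_mod_cast (countIn.mono (oddWithDivisorsUpTo_subset_union hH hHK) x).trans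
      (countIn.union_le _ _ x)
  have hbad := countIn_multiplesAbove_le G K x
  have hT := (Real.le_norm_self _).trans_lt (hK₀ K hK₀K x)
  have hx' : (0 : ℝ) < x := by exact_mod_cast hx
  rw [Real.dist_eq, ← sub_div, abs_div, abs_of_pos hx', div_le_iff₀ hx', abs_le]
  constructor <;> nlinarith

lemma HasDensity.pos_of_oddWithDivisorsIn_nonempty (hG : ∀ g ∈ G, 0 < g)
    (hf : Summable (G.indicator fun g => (1 : ℝ) / g)) (hH : ↑H ⊆ G) {δ : ℝ}
    (hδ : HasDensity (oddWithDivisorsIn G H) δ) (hne : (oddWithDivisorsIn G H).Nonempty) :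
    0 < δ := by
  obtain ⟨n₀, hn₀⟩ := hne
  have hn₀pos : (0 : ℝ) < n₀ := by exact_mod_cast hn₀.1
  obtain ⟨K₀, hK₀⟩ := hf.exists_forall_norm_sum_Ioc_lt (ε := 1 / (2 * n₀)) (by positivity)
  obtain ⟨K, hK₀K, hn₀K⟩ : ∃ K, K₀ ≤ K ∧ n₀ ≤ K := ⟨max K₀ n₀, le_max_left _ _, le_max_right _ _⟩
  set q := 2 * K ! with hq_def
  have hq : 0 < q := by positivity
  have hq' : (0 : ℝ) < q := by exact_mod_cast hq
  have hbound : ∀ x : ℕ, (countIn {n | n ≡ n₀ [MOD q]} x : ℝ) ≤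
      countIn (oddWithDivisorsIn G H) x + x * (1 / (2 * q)) + countIn G x := by
    intro x
    have h := countIn_setOf_modEq_le hG hH hn₀ hn₀K x
    rw [← hq_def] at h
    have hT := (Real.le_norm_self _).trans (hK₀ K hK₀K x).le
    have h₃ : (x : ℝ) * n₀ / q * ∑ g ∈ Ioc K x, G.indicator (fun g => (1 : ℝ) / g) g ≤
        x * (1 / (2 * q)) := by
      calc (x : ℝ) * n₀ / q * ∑ g ∈ Ioc K x, G.indicator (fun g => (1 : ℝ) / g) g
          ≤ x * n₀ / q * (1 / (2 * n₀)) := by gcongr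
        _ = x * (1 / (2 * q)) := by field_simp
    linarith
  have hlim : 1 / (q : ℝ) ≤ δ + 1 / (2 * q) + 0 := by
    refine le_of_tendsto_of_tendsto (hasDensity_setOf_modEq hq n₀)
      ((hδ.add_const _).add (hasDensity_zero_of_summable_indicator hf)) ?_
    filter_upwards [eventually_gt_atTop 0] with x hx
    have hx' : (0 : ℝ) < x := by exact_mod_cast hx
    rw [div_add' _ _ _ hx'.ne', ← add_div, div_le_div_iff_of_pos_right hx']
    linarith [hbound x]
  have hhalf : 1 / (q : ℝ) = 1 / (2 * q) + 1 / (2 * q) := by field_simp; norm_num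
  linarith [one_div_pos.2 (by positivity : (0 : ℝ) < 2 * q)]

end

/-- Let `G` be a set of odd positive integers with convergent reciprocal sum, and let `H`
be a finite subset of `G`. The set of odd positive `n` whose set of divisors belonging to
`G` equals `H` has a well-defined asymptotic density, which is positive whenever the set
is nonempty. -/
theorem stmt3 (G : Set ℕ) (hG : ∀ g ∈ G, 0 < g ∧ Odd g)
    (hsum : Summable fun g : G => (1 : ℝ) / ((g : ℕ) : ℝ))
    (H : Finset ℕ) (hH : ↑H ⊆ G) :
    ∃ δ : ℝ,
      HasDensity {n : ℕ | 0 < n ∧ Odd n ∧ {g ∈ G | g ∣ n} = ↑H} δ ∧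
      ({n : ℕ | 0 < n ∧ Odd n ∧ {g ∈ G | g ∣ n} = ↑H}.Nonempty → 0 < δ) := by
  have hGpos : ∀ g ∈ G, 0 < g := fun g hg => (hG g hg).1
  have hf : Summable (G.indicator fun g => (1 : ℝ) / g) := summable_subtype_iff_indicator.1 hsum
  obtain ⟨δ, hδ⟩ := exists_hasDensity_oddWithDivisorsIn hGpos hf hH
  exact ⟨δ, hδ, hδ.pos_of_oddWithDivisorsIn_nonempty hGpos hf hH⟩
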